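/- arXiv:0804.0031 — 3 statements merged into one kernel-verified Lean document; each statement's English description precedes it below -/
import Mathlib

section
/- Let G and H be p×p symmetric matrices each having at least two distinct eigenvalues. If tr(H Uᵀ G U) = tr(H S Uᵀ G U S) for all orthogonal U and all diagonal sign matrices S, then H is diagonal. -/
/-!
For a diagonal projection `P`, `S = 1 - 2P` is a sign matrix and `tr (S H S B)` is quadratic in
`P`. Hence the alternating sum of these traces over the flips at `{i, j}`, `{i}`, `{j}` and `∅` is
the cross term `4 (H i j * B j i + H j i * B i j)`, i.e. `8 H i j * B i j` for symmetric `H` and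
`B = Uᵀ G U`; invariance under sign flips makes it `0`. So `H i j = 0` as soon as some orthogonal
`U` has `(Uᵀ G U) i j ≠ 0`. Such a `U` exists because eigenvectors `v`, `w` of `G` for distinct
eigenvalues are orthogonal: the rotated pair `x, y = ‖w‖ v ± ‖v‖ w` is orthogonal with
`⟪x, G y⟫ = (λ - μ) ‖v‖² ‖w‖² ≠ 0`, and once normalised it can be placed at positions `i`, `j`
of an orthonormal basis, the columns of `U`.
-/

open Matrix

section SignFlips

variable {n R : Type*} [DecidableEq n] [CommRing R]

theorem isDiag_one_sub_two_smul_diagonal (d : n → R) : (1 - 2 • diagonal d).IsDiag :=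
  isDiag_one.sub ((isDiag_diagonal d).smul 2)

theorem one_sub_two_smul_diagonal_apply_self_eq_one_or_eq_neg_one {d : n → R}
    (hd : ∀ a, d a = 0 ∨ d a = 1) (a : n) :
    (1 - 2 • diagonal d : Matrix n n R) a a = 1 ∨
      (1 - 2 • diagonal d : Matrix n n R) a a = -1 := by
  rcases hd a with h | h <;>
    simp only [Matrix.sub_apply, Matrix.smul_apply, one_apply_eq, diagonal_apply_eq, h] <;> norm_num

variable [Fintype n]

theorem trace_sign_flip_polarization (H B P Q : Matrix n n R) :
    trace (H * B) + trace ((1 - 2 • (P + Q)) * H * (1 - 2 • (P + Q)) * B)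
      - trace ((1 - 2 • P) * H * (1 - 2 • P) * B) - trace ((1 - 2 • Q) * H * (1 - 2 • Q) * B)
      = 4 * (trace (P * H * Q * B) + trace (Q * H * P * B)) := by
  have expand : ∀ X : Matrix n n R, (1 - 2 • X) * H * (1 - 2 • X) * B
      = H * B - 2 • (X * H * B) - 2 • (H * X * B) + 4 • (X * H * X * B) := by
    intro X; noncomm_ring
  simp only [expand, add_mul, mul_add, trace_add, trace_sub, trace_smul]
  ring

theorem trace_single_mul_mul_single_mul (H B : Matrix n n R) (i j : n) :
    trace (single i i 1 * H * single j j 1 * B) = H i j * B j i := by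
  simp [trace_single_mul]

end SignFlips

section Orthonormal

variable {E : Type*} [NormedAddCommGroup E] [InnerProductSpace ℝ E]

theorem LinearMap.IsSymmetric.inner_eq_zero_of_eigen {T : E →ₗ[ℝ] E} (hT : T.IsSymmetric)
    {v w : E} {lam mu : ℝ} (hv : T v = lam • v) (hw : T w = mu • w) (hne : lam ≠ mu) :
    inner ℝ v w = 0 := by
  have h := hT v w
  rw [hv, hw, real_inner_smul_left, real_inner_smul_right] at h
  exact (mul_eq_mul_right_iff.mp h).resolve_left hne

theorem LinearMap.IsSymmetric.exists_orthogonal_inner_ne_zero {T : E →ₗ[ℝ] E}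
    (hT : T.IsSymmetric) {v w : E} {lam mu : ℝ} (hv0 : v ≠ 0) (hw0 : w ≠ 0)
    (hv : T v = lam • v) (hw : T w = mu • w) (hne : lam ≠ mu) :
    ∃ x y : E, inner ℝ x y = 0 ∧ inner ℝ x (T y) ≠ 0 := by
  have hvw := hT.inner_eq_zero_of_eigen hv hw hne
  refine ⟨‖w‖ • v + ‖v‖ • w, ‖w‖ • v - ‖v‖ • w, ?_, ?_⟩
  · simp [inner_add_left, inner_sub_right, real_inner_smul_left, real_inner_smul_right, hvw,
      real_inner_comm v w, norm_smul]
    ring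
  · have hxTy : inner ℝ (‖w‖ • v + ‖v‖ • w) (T (‖w‖ • v - ‖v‖ • w))
        = (lam - mu) * (‖v‖ * ‖w‖) ^ 2 := by
      simp [inner_add_left, inner_sub_right, real_inner_smul_left, real_inner_smul_right, hv, hw,
        hvw, real_inner_comm v w]
      ring
    rw [hxTy]
    exact mul_ne_zero (sub_ne_zero.mpr hne)
      (pow_ne_zero 2 (mul_ne_zero (norm_ne_zero_iff.mpr hv0) (norm_ne_zero_iff.mpr hw0)))

theorem exists_orthonormal_inner_ne_zero_of_orthogonal {T : E →ₗ[ℝ] E} {x y : E}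
    (hxy : inner ℝ x y = 0) (hxTy : inner ℝ x (T y) ≠ 0) :
    ∃ x y : E, ‖x‖ = 1 ∧ ‖y‖ = 1 ∧ inner ℝ x y = 0 ∧ inner ℝ x (T y) ≠ 0 := by
  have hx : x ≠ 0 := by rintro rfl; simp at hxTy
  have hy : y ≠ 0 := by rintro rfl; simp at hxTy
  refine ⟨‖x‖⁻¹ • x, ‖y‖⁻¹ • y, norm_smul_inv_norm hx, norm_smul_inv_norm hy, ?_, ?_⟩
  · simp [real_inner_smul_left, real_inner_smul_right, hxy]
  · simp [real_inner_smul_left, real_inner_smul_right, hxTy, hx, hy]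

theorem exists_orthonormalBasis_apply_eq_of_orthogonal [FiniteDimensional ℝ E] {ι : Type*}
    [Fintype ι] [DecidableEq ι] (card_ι : Module.finrank ℝ E = Fintype.card ι) {i j : ι}
    (hij : i ≠ j) {x y : E} (hx : ‖x‖ = 1) (hy : ‖y‖ = 1) (hxy : inner ℝ x y = 0) :
    ∃ b : OrthonormalBasis ι ℝ E, b i = x ∧ b j = y := by
  set f : ι → E := fun k => if k = i then x else y
  have hf : Orthonormal ℝ (({i, j} : Set ι).domRestrict f) := by
    rw [orthonormal_iff_ite]
    rintro ⟨a, ha⟩ ⟨b, hb⟩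
    simp only [Set.mem_insert_iff, Set.mem_singleton_iff] at ha hb
    rcases ha with rfl | rfl <;> rcases hb with rfl | rfl <;>
      simp [f, hij, hij.symm, real_inner_comm x y, hxy, hx, hy]
  obtain ⟨b, hb⟩ := hf.exists_orthonormalBasis_extension_of_card_eq card_ι
  exact ⟨b, by simpa [f] using hb i (by simp), by simpa [f, hij.symm] using hb j (by simp)⟩

end Orthonormal

section OrthogonalConj

variable {n : Type*} [Fintype n] [DecidableEq n]

theorem OrthonormalBasis.exists_orthogonal_conj_apply_eq_inner
    (b : OrthonormalBasis n ℝ (EuclideanSpace ℝ n)) (G : Matrix n n ℝ) :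
    ∃ U : Matrix n n ℝ, Uᵀ * U = 1 ∧
      ∀ i j, (Uᵀ * G * U) i j = inner ℝ (b i) (G.toEuclideanLin (b j)) := by
  set e := EuclideanSpace.basisFun n ℝ
  refine ⟨e.toBasis.toMatrix b, ?_, fun i j => ?_⟩
  · simpa [star_eq_conjTranspose] using
      mem_unitaryGroup_iff'.mp (e.toMatrix_orthonormalBasis_mem_orthogonal b)
  · simp [e, mul_apply, Module.Basis.toMatrix_apply, EuclideanSpace.inner_eq_star_dotProduct,
      dotProduct, mulVec, Finset.sum_mul]
    rw [Finset.sum_comm]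
    exact Finset.sum_congr rfl fun _ _ => Finset.sum_congr rfl fun _ _ => by ring

theorem Matrix.IsSymm.exists_orthogonal_conj_apply_ne_zero {G : Matrix n n ℝ} (hG : G.IsSymm)
    {v w : n → ℝ} {lam mu : ℝ} (hv0 : v ≠ 0) (hw0 : w ≠ 0) (hv : G *ᵥ v = lam • v)
    (hw : G *ᵥ w = mu • w) (hne : lam ≠ mu) {i j : n} (hij : i ≠ j) :
    ∃ U : Matrix n n ℝ, Uᵀ * U = 1 ∧ (Uᵀ * G * U) i j ≠ 0 := by
  have hT : G.toEuclideanLin.IsSymmetric :=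
    isSymmetric_toEuclideanLin_iff.mpr (isHermitian_iff_isSymm.mpr hG)
  obtain ⟨x, y, hxy, hxTy⟩ := hT.exists_orthogonal_inner_ne_zero
    (v := WithLp.toLp 2 v) (w := WithLp.toLp 2 w) (by simpa using hv0) (by simpa using hw0)
    (by simp [hv]) (by simp [hw]) hne
  obtain ⟨x, y, hx, hy, hxy, hxTy⟩ := exists_orthonormal_inner_ne_zero_of_orthogonal hxy hxTy
  obtain ⟨b, hbi, hbj⟩ :=
    exists_orthonormalBasis_apply_eq_of_orthogonal finrank_euclideanSpace hij hx hy hxy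
  obtain ⟨U, hU, hUG⟩ := b.exists_orthogonal_conj_apply_eq_inner G
  exact ⟨U, hU, by rwa [hUG, hbi, hbj]⟩

end OrthogonalConj

theorem antipodal_symmetry_necessity_general (p : ℕ) (G H : Matrix (Fin p) (Fin p) ℝ)
    (hG : G.IsSymm) (hH : H.IsSymm)
    (hGeig : ∃ (lam mu : ℝ) (v w : Fin p → ℝ), v ≠ 0 ∧ w ≠ 0 ∧
      G.mulVec v = lam • v ∧ G.mulVec w = mu • w ∧ lam ≠ mu)
    (hsym : ∀ (U S : Matrix (Fin p) (Fin p) ℝ), Uᵀ * U = 1 →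
      S.IsDiag → (∀ i, S i i = 1 ∨ S i i = -1) →
      Matrix.trace (H * Uᵀ * G * U) = Matrix.trace (S * H * S * Uᵀ * G * U)) :
    H.IsDiag := by
  intro i j hij
  obtain ⟨lam, mu, v, w, hv0, hw0, hv, hw, hne⟩ := hGeig
  obtain ⟨U, hU, hB⟩ := hG.exists_orthogonal_conj_apply_ne_zero hv0 hw0 hv hw hne hij
  set B := Uᵀ * G * U
  have hBsymm : B.IsSymm := by
    simp [B, IsSymm, transpose_mul, hG.eq, Matrix.mul_assoc]
  have hflip : ∀ d : Fin p → ℝ, (∀ a, d a = 0 ∨ d a = 1) →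
      trace ((1 - 2 • diagonal d) * H * (1 - 2 • diagonal d) * B) = trace (H * B) := by
    intro d hd
    simpa only [B, Matrix.mul_assoc] using (hsym U _ hU (isDiag_one_sub_two_smul_diagonal d)
      (one_sub_two_smul_diagonal_apply_self_eq_one_or_eq_neg_one hd)).symm
  have hsingle : ∀ k a, (Pi.single k 1 : Fin p → ℝ) a = 0 ∨
      (Pi.single k 1 : Fin p → ℝ) a = 1 := by
    intro k a; by_cases h : a = k <;> simp [h]
  have hpair : ∀ a, (Pi.single i 1 : Fin p → ℝ) a + (Pi.single j 1 : Fin p → ℝ) a = 0 ∨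
      (Pi.single i 1 : Fin p → ℝ) a + (Pi.single j 1 : Fin p → ℝ) a = 1 := by
    intro a; by_cases h : a = i <;> by_cases h' : a = j <;> simp_all
  have hcross :=
    trace_sign_flip_polarization H B (diagonal (Pi.single i 1)) (diagonal (Pi.single j 1))
  rw [diagonal_add, hflip _ hpair, hflip _ (hsingle i), hflip _ (hsingle j), diagonal_single,
    diagonal_single, trace_single_mul_mul_single_mul, trace_single_mul_mul_single_mul,
    hH.apply i j, hBsymm.apply i j] at hcross
  have hHB : H i j * B i j = 0 := by linarith
  exact (mul_eq_zero.mp hHB).resolve_right hB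

theorem antipodal_symmetry_necessity (p : ℕ) (G H : Matrix (Fin p) (Fin p) ℝ)
    (hG : G.IsSymm) (hH : H.IsSymm)
    (hGeig : ∃ (lam mu : ℝ) (v w : Fin p → ℝ), v ≠ 0 ∧ w ≠ 0 ∧
      G.mulVec v = lam • v ∧ G.mulVec w = mu • w ∧ lam ≠ mu)
    (hHeig : ∃ (lam mu : ℝ) (v w : Fin p → ℝ), v ≠ 0 ∧ w ≠ 0 ∧
      H.mulVec v = lam • v ∧ H.mulVec w = mu • w ∧ lam ≠ mu)
    (hsym : ∀ (U S : Matrix (Fin p) (Fin p) ℝ), Uᵀ * U = 1 →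
      S.IsDiag → (∀ i, S i i = 1 ∨ S i i = -1) →
      Matrix.trace (H * Uᵀ * G * U) = Matrix.trace (S * H * S * Uᵀ * G * U)) :
    H.IsDiag :=
  antipodal_symmetry_necessity_general p G H hG hH hGeig hsym
end

section
/- For any p×p orthogonal matrix X and vectors a, b ∈ ℝᵖ with nonincreasing entries, aᵀ (X ∘ X) b ≤ aᵀ b, with equality when X is a diagonal sign matrix. -/
/-!
The entrywise square of an orthogonal matrix is doubly stochastic, so by Birkhoff's theorem it is
a convex combination of permutation matrices. The form `a ⬝ᵥ (M *ᵥ b)` is linear in `M`, and on a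
permutation matrix it is bounded by `a ⬝ᵥ b` by the rearrangement inequality, since antitone `a`
and `b` monovary.
-/

open Matrix

namespace Matrix

variable {R n : Type*}

theorem dotProduct_mulVec_eq_sum_sum [Fintype n] [CommSemiring R] (a b : n → R)
    (M : Matrix n n R) :
    a ⬝ᵥ (M *ᵥ b) = ∑ i, ∑ j, a i * M i j * b j := by
  simp [dotProduct, mulVec, Finset.mul_sum, mul_assoc]

variable [DecidableEq n]

theorem hadamard_self_mem_doublyStochastic [Fintype n] [CommRing R] [LinearOrder R]
    [IsStrictOrderedRing R] {X : Matrix n n R} (hX : Xᵀ * X = 1) :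
    X ⊙ X ∈ doublyStochastic R n := by
  have hX' : X * Xᵀ = 1 := mul_eq_one_comm.mp hX
  refine mem_doublyStochastic_iff_sum.mpr
    ⟨fun i j => mul_self_nonneg _, fun i => ?_, fun j => ?_⟩
  · simpa [mul_apply] using congrFun (congrFun hX' i) i
  · simpa [mul_apply] using congrFun (congrFun hX j) j

theorem hadamard_self_eq_one_of_isDiag [Ring R] {X : Matrix n n R} (hdiag : X.IsDiag)
    (hsign : ∀ i, X i i = 1 ∨ X i i = -1) : X ⊙ X = 1 := by
  ext i j
  rcases eq_or_ne i j with rfl | hij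
  · rcases hsign i with h | h <;> simp [h]
  · simp [hdiag hij, hij]

theorem dotProduct_mulVec_le_of_mem_doublyStochastic [Fintype n] [Field R] [LinearOrder R]
    [IsStrictOrderedRing R] {a b : n → R} (hab : Monovary a b) {M : Matrix n n R}
    (hM : M ∈ doublyStochastic R n) : a ⬝ᵥ (M *ᵥ b) ≤ a ⬝ᵥ b := by
  have hlin : IsLinearMap R fun M : Matrix n n R => a ⬝ᵥ (M *ᵥ b) :=
    ⟨fun M N => by simp [add_mulVec], fun c M => by simp [smul_mulVec]⟩
  rw [← SetLike.mem_coe, doublyStochastic_eq_convexHull_permMatrix] at hM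
  refine convexHull_min ?_ (convex_halfSpace_le hlin _) hM
  rintro _ ⟨σ, rfl⟩
  simpa [permMatrix_mulVec, dotProduct] using hab.sum_mul_comp_perm_le_sum_mul

end Matrix

theorem orthostochastic_bound (p : ℕ) (a b : Fin p → ℝ)
    (ha : Antitone a) (hb : Antitone b)
    (X : Matrix (Fin p) (Fin p) ℝ) (hX : Xᵀ * X = 1) :
    (∑ i, ∑ j, a i * (X i j)^2 * b j ≤ ∑ i, a i * b i) ∧
    ((X.IsDiag ∧ ∀ i, X i i = 1 ∨ X i i = -1) →
      ∑ i, ∑ j, a i * (X i j)^2 * b j = ∑ i, a i * b i) := by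
  have hsum : ∑ i, ∑ j, a i * (X i j)^2 * b j = a ⬝ᵥ ((X ⊙ X) *ᵥ b) := by
    simp [dotProduct_mulVec_eq_sum_sum, sq]
  rw [hsum]
  refine ⟨dotProduct_mulVec_le_of_mem_doublyStochastic (ha.monovary hb)
    (hadamard_self_mem_doublyStochastic hX), ?_⟩
  rintro ⟨hdiag, hsign⟩
  simp [hadamard_self_eq_one_of_isDiag hdiag hsign, dotProduct]
end

section
/- If a, b ∈ ℝᵖ have strictly decreasing entries, then an orthogonal matrix X maximizes aᵀ (X ∘ X) b over O(p) if and only if X ∘ X = I, equivalently X is a diagonal sign matrix. -/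
/-!
The entrywise square `X ⊙ X` of an orthogonal matrix is doubly stochastic, and the objective is
the linear functional `S ↦ aᵀ S b` evaluated at `S = X ⊙ X`. By Birkhoff's theorem `S` is a convex
combination of permutation matrices `P_σ`, and by the rearrangement inequality
`aᵀ P_σ b ≤ aᵀ b`, strictly unless `σ = 1` because `a` and `b` are strictly decreasing. Hence the
maximum `aᵀ b` is attained, at `X = 1`, and exactly when all the weight sits on the identity,
i.e. when `X ⊙ X = 1`.
-/

open Matrix

theorem Equiv.Perm.eq_one_of_monotone {ι : Type*} [LinearOrder ι] [Finite ι]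
    {σ : Equiv.Perm ι} (hσ : Monotone σ) : σ = 1 := by
  let e : ι ≃o ι := (hσ.strictMono_of_injective σ.injective).orderIsoOfSurjective σ σ.surjective
  ext i
  exact congrArg (fun f : ι ≃o ι => f i) (Subsingleton.elim e (OrderIso.refl ι))

variable {ι R : Type*} [Fintype ι]

lemma Matrix.dotProduct_hadamard_self_mulVec [CommSemiring R] (a b : ι → R) (Y : Matrix ι ι R) :
    a ⬝ᵥ (Y ⊙ Y) *ᵥ b = ∑ i, ∑ j, a i * Y i j ^ 2 * b j := by
  simp only [dotProduct, mulVec, hadamard_apply, Finset.mul_sum]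
  exact Finset.sum_congr rfl fun i _ => Finset.sum_congr rfl fun j _ => by ring

lemma Matrix.dotProduct_sum_smul_permMatrix_mulVec [CommRing R] [DecidableEq ι]
    (w : Equiv.Perm ι → R) (a b : ι → R) :
    a ⬝ᵥ (∑ σ, w σ • σ.permMatrix R) *ᵥ b = ∑ σ, w σ * ∑ i, a i * b (σ i) := by
  simp only [sum_mulVec, smul_mulVec, permMatrix_mulVec, dotProduct_sum, dotProduct_smul,
    smul_eq_mul]
  rfl

lemma sum_mul_comp_perm_lt_sum_mul_of_strictAnti [CommRing R] [LinearOrder R]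
    [IsStrictOrderedRing R] [LinearOrder ι] {a b : ι → R}
    (ha : StrictAnti a) (hb : StrictAnti b) {σ : Equiv.Perm ι} (hσ : σ ≠ 1) :
    ∑ i, a i * b (σ i) < ∑ i, a i * b i := by
  simp only [mul_comm (a _)]
  refine (hb.antitone.monovary ha.antitone).sum_comp_perm_mul_lt_sum_mul_iff.2 fun h => hσ ?_
  exact Equiv.Perm.eq_one_of_monotone fun i j hij => hb.le_iff_ge.1 (ha.trans_monovary h hij)

lemma Matrix.hadamard_self_mem_doublyStochastic_s8 [CommRing R] [LinearOrder R]
    [IsStrictOrderedRing R] [DecidableEq ι] {X : Matrix ι ι R} (hX : Xᵀ * X = 1) :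
    X ⊙ X ∈ doublyStochastic R ι := by
  have hX' : X * Xᵀ = 1 := mul_eq_one_comm.mp hX
  refine mem_doublyStochastic_iff_sum.2 ⟨fun i j => mul_self_nonneg _, fun i => ?_, fun j => ?_⟩
  · simpa [mul_apply] using congrFun (congrFun hX' i) i
  · simpa [mul_apply] using congrFun (congrFun hX j) j

section

variable [Field R] [LinearOrder R] [IsStrictOrderedRing R] [DecidableEq ι]

lemma Matrix.dotProduct_mulVec_le_of_mem_doublyStochastic_s8 {a b : ι → R} (hab : Monovary a b)
    {S : Matrix ι ι R} (hS : S ∈ doublyStochastic R ι) : a ⬝ᵥ S *ᵥ b ≤ a ⬝ᵥ b := by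
  obtain ⟨w, hw0, hw1, rfl⟩ := exists_eq_sum_perm_of_mem_doublyStochastic hS
  rw [dotProduct_sum_smul_permMatrix_mulVec]
  calc ∑ σ, w σ * ∑ i, a i * b (σ i) ≤ ∑ σ, w σ * a ⬝ᵥ b :=
        Finset.sum_le_sum fun σ _ =>
          mul_le_mul_of_nonneg_left hab.sum_mul_comp_perm_le_sum_mul (hw0 σ)
    _ = a ⬝ᵥ b := by rw [← Finset.sum_mul, hw1, one_mul]

lemma Matrix.eq_one_of_mem_doublyStochastic_of_dotProduct_mulVec_eq [LinearOrder ι]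
    {a b : ι → R} (ha : StrictAnti a) (hb : StrictAnti b) {S : Matrix ι ι R}
    (hS : S ∈ doublyStochastic R ι) (h : a ⬝ᵥ S *ᵥ b = a ⬝ᵥ b) : S = 1 := by
  obtain ⟨w, hw0, hw1, rfl⟩ := exists_eq_sum_perm_of_mem_doublyStochastic hS
  rw [dotProduct_sum_smul_permMatrix_mulVec, ← one_mul (a ⬝ᵥ b), ← hw1, Finset.sum_mul] at h
  have hterm := (Finset.sum_eq_sum_iff_of_le fun σ _ => mul_le_mul_of_nonneg_left
    (ha.antitone.monovary hb.antitone).sum_mul_comp_perm_le_sum_mul (hw0 σ)).1 h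
  have hw : ∀ σ ≠ 1, w σ = 0 := fun σ hσ => by
    by_contra hσ0
    exact (sum_mul_comp_perm_lt_sum_mul_of_strictAnti ha hb hσ).ne
      (mul_left_cancel₀ hσ0 (hterm σ (Finset.mem_univ σ)))
  rw [Finset.sum_eq_single 1 (fun σ _ hσ => hw σ hσ) (by simp)] at hw1
  rw [Finset.sum_eq_single 1 (fun σ _ hσ => by rw [hw σ hσ, zero_smul]) (by simp), hw1]
  simp

end

theorem bingham_mode_characterization (p : ℕ) (a b : Fin p → ℝ)
    (ha : StrictAnti a) (hb : StrictAnti b)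
    (X : Matrix (Fin p) (Fin p) ℝ) (hX : Xᵀ * X = 1) :
    (∀ Y : Matrix (Fin p) (Fin p) ℝ, Yᵀ * Y = 1 →
        ∑ i, ∑ j, a i * (Y i j)^2 * b j ≤ ∑ i, ∑ j, a i * (X i j)^2 * b j) ↔
      ((Matrix.of fun i j => X i j * X i j) = (1 : Matrix (Fin p) (Fin p) ℝ)) := by
  change _ ↔ X ⊙ X = 1
  simp only [← dotProduct_hadamard_self_mulVec]
  have hab : Monovary a b := ha.antitone.monovary hb.antitone
  have hXX := hadamard_self_mem_doublyStochastic_s8 hX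
  constructor
  · intro hmax
    have h_one : a ⬝ᵥ ((1 : Matrix (Fin p) (Fin p) ℝ) ⊙ 1) *ᵥ b = a ⬝ᵥ b := by
      rw [one_hadamard, diag_one, Pi.one_def, diagonal_one, one_mulVec]
    exact eq_one_of_mem_doublyStochastic_of_dotProduct_mulVec_eq ha hb hXX <|
      le_antisymm (dotProduct_mulVec_le_of_mem_doublyStochastic_s8 hab hXX)
        (h_one ▸ hmax 1 (by simp))
  · intro hX_one Y hY
    rw [hX_one, one_mulVec]
    exact dotProduct_mulVec_le_of_mem_doublyStochastic_s8 hab (hadamard_self_mem_doublyStochastic_s8 hY)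
end
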